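/- Let n ≥ 1, ℓ ≥ 1, and let (ε, σ) ∈ B n. Then the number of points x : Fin n → ZMod (2ℓ) fixed by the action of (ε, σ) equals 2^(o(ε,σ)) * (2ℓ)^(e(ε,σ)), where e(ε,σ) and o(ε,σ) are the numbers of even and odd orbits of σ on Fin n respectively. (Equivalently, the character of the permutation representation ℂ[(ℤ/(2ℓ)ℤ)^n] of B n at (ε, σ) equals 2^(o(ε,σ)) * (2ℓ)^(e(ε,σ)).) -/

import Mathlib

/-! Common setup: the signed symmetric group `B n` as a semidirect product,
its action on `Fin n → ZMod m`, and the inclusion `B n →* B (n+1)`. -/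

/-- The additive automorphism of sign vectors induced by a permutation:
`ε ↦ ε ∘ σ⁻¹`. -/
def signAddAut (n : ℕ) (σ : Equiv.Perm (Fin n)) :
    (Fin n → ZMod 2) ≃+ (Fin n → ZMod 2) :=
  { Equiv.arrowCongr σ (Equiv.refl (ZMod 2)) with
    map_add' := fun _ _ => rfl }

/-- The action of permutations on sign vectors, as a homomorphism to the
automorphism group of `Multiplicative (Fin n → ZMod 2)`. -/
def bSignHom (n : ℕ) :
    Equiv.Perm (Fin n) →* MulAut (Multiplicative (Fin n → ZMod 2)) where
  toFun σ := AddEquiv.toMultiplicative (signAddAut n σ)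
  map_one' := by ext ε; rfl
  map_mul' σ τ := by ext ε; rfl

/-- The signed symmetric group on `n` letters, modelled as the semidirect
product `(Fin n → ZMod 2) ⋊ Equiv.Perm (Fin n)`, where a permutation acts
on sign vectors by `σ • ε = ε ∘ σ⁻¹`. -/
abbrev B (n : ℕ) :=
  Multiplicative (Fin n → ZMod 2) ⋊[bSignHom n] Equiv.Perm (Fin n)

lemma neg_one_pow_val_add {M : Type*} [Monoid M] [HasDistribNeg M] (a b : ZMod 2) :
    (-1 : M) ^ (a + b).val = (-1 : M) ^ a.val * (-1 : M) ^ b.val := by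
  fin_cases a <;> fin_cases b
  · show (-1 : M) ^ 0 = (-1 : M) ^ 0 * (-1 : M) ^ 0
    simp
  · show (-1 : M) ^ 1 = (-1 : M) ^ 0 * (-1 : M) ^ 1
    simp
  · show (-1 : M) ^ 1 = (-1 : M) ^ 1 * (-1 : M) ^ 0
    simp
  · show (-1 : M) ^ 0 = (-1 : M) ^ 1 * (-1 : M) ^ 1
    simp

/-- The action of `B n` on `Fin n → ZMod m`: permute coordinates and negate
the coordinates with sign `1`, i.e. `((ε,σ) • x) i = (-1)^(ε i).val * x (σ⁻¹ i)`. -/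
instance BAct (n m : ℕ) : MulAction (B n) (Fin n → ZMod m) where
  smul g x := fun i =>
    (-1 : ZMod m) ^ (Multiplicative.toAdd g.left i).val * x (g.right⁻¹ i)
  one_smul x := by
    funext i
    show (-1 : ZMod m) ^ ((0 : ZMod 2)).val * x i = x i
    simp
  mul_smul g h x := by
    funext i
    show (-1 : ZMod m) ^ ((Multiplicative.toAdd g.left i)
        + (Multiplicative.toAdd h.left (g.right⁻¹ i))).val
        * x (h.right⁻¹ (g.right⁻¹ i))
      = (-1 : ZMod m) ^ (Multiplicative.toAdd g.left i).val
        * ((-1 : ZMod m) ^ (Multiplicative.toAdd h.left (g.right⁻¹ i)).val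
          * x (h.right⁻¹ (g.right⁻¹ i)))
    rw [neg_one_pow_val_add, mul_assoc]

lemma bact_smul_def {n m : ℕ} (g : B n) (x : Fin n → ZMod m) (i : Fin n) :
    (g • x) i = (-1 : ZMod m) ^ (Multiplicative.toAdd g.left i).val * x (g.right⁻¹ i) :=
  rfl

/-- Extension of a permutation of `Fin n` to `Fin (n+1)`, fixing the last letter. -/
def extendPermEquiv {n : ℕ} (σ : Equiv.Perm (Fin n)) : Equiv.Perm (Fin (n + 1)) where
  toFun := Fin.snoc (fun i => Fin.castSucc (σ i)) (Fin.last n)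
  invFun := Fin.snoc (fun i => Fin.castSucc (σ⁻¹ i)) (Fin.last n)
  left_inv j := by
    induction j using Fin.lastCases with
    | last => simp
    | cast i => simp
  right_inv j := by
    induction j using Fin.lastCases with
    | last => simp
    | cast i => simp

@[simp] lemma extendPermEquiv_castSucc {n : ℕ} (σ : Equiv.Perm (Fin n)) (i : Fin n) :
    extendPermEquiv σ (Fin.castSucc i) = Fin.castSucc (σ i) := by
  simp [extendPermEquiv]

@[simp] lemma extendPermEquiv_last {n : ℕ} (σ : Equiv.Perm (Fin n)) :
    extendPermEquiv σ (Fin.last n) = Fin.last n := by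
  simp [extendPermEquiv]

@[simp] lemma extendPermEquiv_inv {n : ℕ} (σ : Equiv.Perm (Fin n)) :
    (extendPermEquiv σ)⁻¹ = extendPermEquiv σ⁻¹ := by
  refine Equiv.ext fun j => ?_
  rw [Equiv.Perm.inv_def, Equiv.symm_apply_eq]
  induction j using Fin.lastCases with
  | last => simp
  | cast i => simp

@[simp] lemma extendPermEquiv_symm_castSucc {n : ℕ} (σ : Equiv.Perm (Fin n)) (i : Fin n) :
    (extendPermEquiv σ).symm (Fin.castSucc i) = Fin.castSucc (σ.symm i) := by
  rw [Equiv.symm_apply_eq]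
  simp [Equiv.Perm.inv_def]

@[simp] lemma extendPermEquiv_symm_last {n : ℕ} (σ : Equiv.Perm (Fin n)) :
    (extendPermEquiv σ).symm (Fin.last n) = Fin.last n := by
  rw [Equiv.symm_apply_eq]
  simp

/-- The embedding `Equiv.Perm (Fin n) →* Equiv.Perm (Fin (n+1))` extending
a permutation by the identity on the last letter. -/
def extendPerm (n : ℕ) : Equiv.Perm (Fin n) →* Equiv.Perm (Fin (n + 1)) where
  toFun := extendPermEquiv
  map_one' := by
    ext j
    induction j using Fin.lastCases with
    | last => simp
    | cast i => simp
  map_mul' σ τ := by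
    ext j
    induction j using Fin.lastCases with
    | last => simp
    | cast i => simp

/-- The inclusion `B n →* B (n+1)`: extend the sign vector by `0` in the last
coordinate and the permutation by the identity on the last letter. -/
def ιB (n : ℕ) : B n →* B (n + 1) where
  toFun g :=
    ⟨Multiplicative.ofAdd
      (Fin.snoc (Multiplicative.toAdd g.left) 0 : Fin (n + 1) → ZMod 2), extendPerm n g.right⟩
  map_one' := by
    refine SemidirectProduct.ext ?_ ?_
    · show Multiplicative.ofAdd
          (Fin.snoc (0 : Fin n → ZMod 2) (0 : ZMod 2) : Fin (n + 1) → ZMod 2) = 1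
      have h : (Fin.snoc (0 : Fin n → ZMod 2) (0 : ZMod 2) : Fin (n + 1) → ZMod 2) = 0 := by
        funext j
        induction j using Fin.lastCases with
        | last => simp
        | cast i => simp
      rw [h]; rfl
    · show extendPerm n 1 = 1
      exact map_one _
  map_mul' g h := by
    refine SemidirectProduct.ext ?_ ?_
    · show Multiplicative.ofAdd
          (Fin.snoc (Multiplicative.toAdd ((g * h).left)) 0 : Fin (n + 1) → ZMod 2) = _
      have key : (Fin.snoc (Multiplicative.toAdd ((g * h).left)) 0 : Fin (n + 1) → ZMod 2)
          = (Fin.snoc (Multiplicative.toAdd g.left) 0 : Fin (n + 1) → ZMod 2)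
            + (Fin.snoc (Multiplicative.toAdd h.left) 0 : Fin (n + 1) → ZMod 2)
              ∘ ⇑((extendPermEquiv g.right)⁻¹) := by
        funext j
        induction j using Fin.lastCases with
        | last => simp
        | cast i =>
          show (Fin.snoc (Multiplicative.toAdd g.left
              + (Multiplicative.toAdd h.left) ∘ ⇑(g.right⁻¹)) 0
              : Fin (n + 1) → ZMod 2) i.castSucc = _
          simp [Equiv.Perm.inv_def]
      rw [key]; rfl
    · show extendPerm n (g * h).right = _
      exact map_mul (extendPerm n) g.right h.right

/-- The orbits of (the cyclic subgroup generated by) a permutation `σ` of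
`Fin n`, as finsets; `j` lies in the orbit of `i` iff `σ.SameCycle i j`, i.e.
iff `(σ ^ z) i = j` for some integer `z`.  Singleton orbits (fixed points of
`σ`) are included. -/
def orbitsOf {n : ℕ} (σ : Equiv.Perm (Fin n)) : Finset (Finset (Fin n)) :=
  Finset.univ.image fun i => Finset.univ.filter fun j => σ.SameCycle i j

/-- The number of orbits `O` of `σ` on `Fin n` that are even, i.e. with
`∑ j ∈ O, ε j = 0` in `ZMod 2`. -/
def evenOrbitCount {n : ℕ} (ε : Fin n → ZMod 2) (σ : Equiv.Perm (Fin n)) : ℕ :=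
  ((orbitsOf σ).filter fun O => (∑ j ∈ O, ε j) = 0).card

/-- The number of orbits `O` of `σ` on `Fin n` that are odd, i.e. with
`∑ j ∈ O, ε j ≠ 0` in `ZMod 2`. -/
def oddOrbitCount {n : ℕ} (ε : Fin n → ZMod 2) (σ : Equiv.Perm (Fin n)) : ℕ :=
  ((orbitsOf σ).filter fun O => (∑ j ∈ O, ε j) ≠ 0).card

/-! A fixed point `x` of `(ε, σ)` satisfies `x (σ j) = (-1) ^ ε (σ j) * x j`, so on each orbit
of `σ` it is determined by its value `b` at one point, and walking once around the orbit `O`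
forces `(-1) ^ (∑ j ∈ O, ε j) * b = b`. This leaves `b` free for an even orbit and imposes
`-b = b`, i.e. `b ∈ {0, ℓ}`, for an odd one. The orbit-by-orbit description holds for
arbitrary weights `s : α → M` in a commutative monoid in place of the signs. -/

open Finset Function

namespace Equiv.Perm

variable {α : Type*} (σ : Perm α)

section Cycles

noncomputable def cycleRep (j : α) : α := (Quotient.mk (SameCycle.setoid σ) j).out

lemma sameCycle_cycleRep (j : α) : σ.SameCycle (σ.cycleRep j) j :=
  Quotient.mk_out (s := SameCycle.setoid σ) j

lemma cycleRep_apply (j : α) : σ.cycleRep (σ j) = σ.cycleRep j := by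
  rw [cycleRep, cycleRep,
    Quotient.sound (s := SameCycle.setoid σ) (sameCycle_apply_left.2 (SameCycle.refl σ j))]

variable [Fintype α]

lemma minimalPeriod_pos (i : α) : 0 < minimalPeriod σ i :=
  IsPeriodicPt.minimalPeriod_pos (orderOf_pos σ) <| by
    rw [IsPeriodicPt, IsFixedPt, ← coe_pow, pow_orderOf_eq_one, one_apply]

lemma exists_pow_cycleRep_eq (j : α) : ∃ t : ℕ, (σ ^ t) (σ.cycleRep j) = j := by
  obtain ⟨t, -, ht⟩ := (σ.sameCycle_cycleRep j).exists_pow_eq'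
  exact ⟨t, ht⟩

variable [DecidableEq α]

noncomputable def cycleIndex (j : α) : ℕ := Nat.find (σ.exists_pow_cycleRep_eq j)

lemma pow_cycleIndex_apply (j : α) : (σ ^ σ.cycleIndex j) (σ.cycleRep j) = j :=
  Nat.find_spec (σ.exists_pow_cycleRep_eq j)

lemma cycleIndex_le {j : α} {t : ℕ} (h : (σ ^ t) (σ.cycleRep j) = j) : σ.cycleIndex j ≤ t :=
  Nat.find_min' _ h

lemma cycleIndex_out (ω : Quotient (SameCycle.setoid σ)) : σ.cycleIndex ω.out = 0 := by
  refine Nat.le_zero.1 (σ.cycleIndex_le ?_)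
  rw [pow_zero, one_apply, cycleRep, Quotient.out_eq]

lemma cycleIndex_apply_of_ne {j : α} (h : σ j ≠ σ.cycleRep j) :
    σ.cycleIndex (σ j) = σ.cycleIndex j + 1 := by
  have hrep := σ.cycleRep_apply j
  refine le_antisymm (σ.cycleIndex_le ?_) ?_
  · rw [hrep, pow_succ', mul_apply, pow_cycleIndex_apply]
  obtain ⟨t, ht⟩ : ∃ t, σ.cycleIndex (σ j) = t + 1 := by
    refine Nat.exists_eq_succ_of_ne_zero fun h0 => h ?_
    rw [← σ.pow_cycleIndex_apply (σ j), h0, hrep, pow_zero, one_apply]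
  rw [ht, add_le_add_iff_right]
  refine σ.cycleIndex_le (σ.injective ?_)
  rw [← mul_apply, ← pow_succ', ← ht, ← hrep, pow_cycleIndex_apply]

lemma cycleIndex_add_one_of_eq {j : α} (h : σ j = σ.cycleRep j) :
    σ.cycleIndex j + 1 = minimalPeriod σ (σ.cycleRep j) := by
  set r := σ.cycleRep j
  have hper : IsPeriodicPt σ (σ.cycleIndex j + 1) r := by
    rw [IsPeriodicPt, IsFixedPt, ← coe_pow, pow_succ', mul_apply, pow_cycleIndex_apply, h]
  have hpos := σ.minimalPeriod_pos r
  have hprev : (σ ^ (minimalPeriod σ r - 1)) r = j := by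
    apply σ.injective
    rw [← mul_apply, ← pow_succ', Nat.sub_add_cancel hpos, h, coe_pow, iterate_minimalPeriod]
  have := hper.minimalPeriod_le (Nat.succ_pos _)
  have := σ.cycleIndex_le hprev
  omega

def orbitFinset (i : α) : Finset α := univ.filter fun j => σ.SameCycle i j

variable {σ} in
@[simp] lemma mem_orbitFinset {i j : α} : j ∈ σ.orbitFinset i ↔ σ.SameCycle i j := by
  simp [orbitFinset]

lemma orbitFinset_eq_image_range (i : α) :
    σ.orbitFinset i = (range (minimalPeriod σ i)).image fun u => (σ ^ u) i := by
  ext j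
  simp only [mem_orbitFinset, mem_image, mem_range]
  constructor
  · rintro h
    obtain ⟨u, -, rfl⟩ := h.exists_pow_eq'
    refine ⟨u % minimalPeriod σ i, Nat.mod_lt _ (σ.minimalPeriod_pos i), ?_⟩
    simp only [coe_pow, iterate_mod_minimalPeriod_eq]
  · rintro ⟨u, -, rfl⟩
    exact ⟨u, by simp⟩

lemma prod_orbitFinset_eq_prod_range {M : Type*} [CommMonoid M] (f : α → M) (i : α) :
    ∏ j ∈ σ.orbitFinset i, f j = ∏ u ∈ range (minimalPeriod σ i), f ((σ ^ u) i) := by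
  rw [orbitFinset_eq_image_range, prod_image]
  intro a ha b hb hab
  exact iterate_injOn_Iio_minimalPeriod (mem_range.1 ha) (mem_range.1 hb)
    (by simpa only [coe_pow] using hab)

instance : DecidableRel (SameCycle.setoid σ).r := instDecidableRelSameCycle σ

lemma prod_orbitFinset_out_eq_prod_image {M : Type*} [CommMonoid M] (f : Finset α → M) :
    ∏ ω : Quotient (SameCycle.setoid σ), f (σ.orbitFinset ω.out)
      = ∏ O ∈ univ.image σ.orbitFinset, f O := by
  have himage : univ.image σ.orbitFinset
      = univ.image fun ω : Quotient (SameCycle.setoid σ) => σ.orbitFinset ω.out := by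
    ext O
    simp only [mem_image, mem_univ, true_and]
    constructor
    · rintro ⟨j, rfl⟩
      refine ⟨Quotient.mk _ j, ?_⟩
      ext i
      simp only [mem_orbitFinset]
      exact ⟨(σ.sameCycle_cycleRep j).symm.trans, (σ.sameCycle_cycleRep j).trans⟩
    · rintro ⟨ω, rfl⟩
      exact ⟨ω.out, rfl⟩
  rw [himage, prod_image]
  intro ω _ ω' _ h
  have h' : σ.orbitFinset ω.out = σ.orbitFinset ω'.out := h
  have : ω'.out ∈ σ.orbitFinset ω.out := by
    rw [h', mem_orbitFinset]
  exact Quotient.out_equiv_out.1 (mem_orbitFinset.1 this)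

end Cycles

section Twisted

variable {M : Type*} [CommMonoid M] (s : α → M)

def twistedFixedPoints : Set (α → M) := {x | ∀ j, x (σ j) = s (σ j) * x j}

def pathProd (r : α) (t : ℕ) : M := ∏ u ∈ range t, s ((σ ^ (u + 1)) r)

lemma pathProd_zero (r : α) : σ.pathProd s r 0 = 1 := prod_range_zero _

lemma pathProd_succ (r : α) (t : ℕ) :
    σ.pathProd s r (t + 1) = σ.pathProd s r t * s ((σ ^ (t + 1)) r) :=
  prod_range_succ _ _

variable {σ s} in
lemma apply_pow_eq_pathProd_mul {x : α → M} (hx : x ∈ σ.twistedFixedPoints s) (r : α)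
    (t : ℕ) :
    x ((σ ^ t) r) = σ.pathProd s r t * x r := by
  induction t with
  | zero => rw [pow_zero, one_apply, pathProd_zero, one_mul]
  | succ t ih =>
    rw [pathProd_succ, pow_succ', mul_apply, hx, ih, ← mul_apply, ← pow_succ', mul_left_comm,
      mul_assoc]

variable [Fintype α] [DecidableEq α]

lemma pathProd_minimalPeriod (r : α) :
    σ.pathProd s r (minimalPeriod σ r) = ∏ j ∈ σ.orbitFinset r, s j := by
  obtain ⟨k, hk⟩ := Nat.exists_eq_add_one_of_ne_zero (σ.minimalPeriod_pos r).ne'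
  have hwrap : (σ ^ (k + 1)) r = r := by rw [← hk, coe_pow, iterate_minimalPeriod]
  rw [prod_orbitFinset_eq_prod_range, pathProd, hk, prod_range_succ, prod_range_succ', hwrap,
    pow_zero, one_apply]

variable {σ s} in
lemma prod_orbitFinset_mul_apply_of_mem {x : α → M} (hx : x ∈ σ.twistedFixedPoints s)
    (r : α) :
    (∏ j ∈ σ.orbitFinset r, s j) * x r = x r := by
  rw [← pathProd_minimalPeriod, ← apply_pow_eq_pathProd_mul hx, coe_pow, iterate_minimalPeriod]

lemma pathProd_cycleIndex_succ (j : α) :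
    σ.pathProd s (σ.cycleRep j) (σ.cycleIndex j + 1)
      = σ.pathProd s (σ.cycleRep j) (σ.cycleIndex j) * s (σ j) := by
  rw [pathProd_succ, pow_succ', mul_apply, pow_cycleIndex_apply]

noncomputable def twistedExtend
    (b : ∀ ω : Quotient (SameCycle.setoid σ),
      {b : M // (∏ j ∈ σ.orbitFinset ω.out, s j) * b = b})
    (j : α) : M :=
  σ.pathProd s (σ.cycleRep j) (σ.cycleIndex j) * (b (Quotient.mk _ j)).1

lemma twistedExtend_mem
    (b : ∀ ω : Quotient (SameCycle.setoid σ),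
      {b : M // (∏ j ∈ σ.orbitFinset ω.out, s j) * b = b}) :
    σ.twistedExtend s b ∈ σ.twistedFixedPoints s := by
  intro j
  have hq : Quotient.mk (SameCycle.setoid σ) (σ j) = Quotient.mk _ j :=
    Quotient.sound (sameCycle_apply_left.2 (SameCycle.refl σ j))
  unfold twistedExtend
  rw [hq, ← mul_assoc, mul_comm (s (σ j)), ← pathProd_cycleIndex_succ, σ.cycleRep_apply]
  by_cases h : σ j = σ.cycleRep j
  · -- Going once around the cycle multiplies by the orbit product, which fixes `b`.
    have h0 : σ.cycleIndex (σ j) = 0 := by rw [h]; exact σ.cycleIndex_out _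
    rw [h0, pathProd_zero, one_mul, cycleIndex_add_one_of_eq σ h, pathProd_minimalPeriod]
    exact (b _).2.symm
  · rw [cycleIndex_apply_of_ne σ h]

noncomputable def twistedFixedPointsEquiv :
    σ.twistedFixedPoints s ≃
      ∀ ω : Quotient (SameCycle.setoid σ),
        {b : M // (∏ j ∈ σ.orbitFinset ω.out, s j) * b = b} where
  toFun x ω := ⟨x.1 ω.out, prod_orbitFinset_mul_apply_of_mem x.2 _⟩
  invFun b := ⟨σ.twistedExtend s b, σ.twistedExtend_mem s b⟩
  left_inv x := by
    ext j
    dsimp only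
    rw [twistedExtend]
    exact (apply_pow_eq_pathProd_mul x.2 _ _).symm.trans (congrArg x.1 (σ.pow_cycleIndex_apply j))
  right_inv b := by
    funext ω
    ext
    dsimp only
    rw [twistedExtend, Quotient.out_eq, cycleIndex_out, pathProd_zero, one_mul]

lemma card_twistedFixedPoints :
    Nat.card (σ.twistedFixedPoints s)
      = ∏ O ∈ univ.image σ.orbitFinset, Nat.card {b : M // (∏ j ∈ O, s j) * b = b} := by
  rw [Nat.card_congr (σ.twistedFixedPointsEquiv s), Nat.card_pi]
  exact σ.prod_orbitFinset_out_eq_prod_image fun O =>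
    Nat.card {b : M // (∏ j ∈ O, s j) * b = b}

end Twisted

end Equiv.Perm

lemma prod_neg_one_pow_val {ι M : Type*} [CommMonoid M] [HasDistribNeg M] (S : Finset ι)
    (f : ι → ZMod 2) : ∏ i ∈ S, (-1 : M) ^ (f i).val = (-1) ^ (∑ i ∈ S, f i).val := by
  classical
  induction S using Finset.induction_on with
  | empty => simp
  | insert a S ha ih => rw [prod_insert ha, sum_insert ha, neg_one_pow_val_add, ih]

lemma card_neg_one_pow_val_mul_eq_self {l : ℕ} (hl : 0 < l) (e : ZMod 2) :
    Nat.card {b : ZMod (2 * l) // (-1) ^ e.val * b = b} = if e = 0 then 2 * l else 2 := by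
  have : NeZero (2 * l) := ⟨by omega⟩
  have hval : (l : ZMod (2 * l)).val = l := ZMod.val_cast_of_lt (by omega)
  obtain rfl | rfl : e = 0 ∨ e = 1 := by decide +revert
  · simp [Nat.card_eq_fintype_card]
  · have hneg : ∀ b : ZMod (2 * l),
        (-1) ^ (1 : ZMod 2).val * b = b ↔ b ∈ ({0, (l : ZMod _)} : Finset _) := by
      intro b
      rw [show (1 : ZMod 2).val = 1 from rfl, pow_one, neg_one_mul, ZMod.neg_eq_self_iff,
        mem_insert, mem_singleton, ← (ZMod.val_injective _).eq_iff (b := (l : ZMod (2 * l))),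
        hval]
      exact or_congr_right (by omega)
    rw [Nat.card_congr (Equiv.subtypeEquivRight hneg), Nat.card_eq_finsetCard, card_pair]
    · rfl
    · intro h
      have := congrArg ZMod.val h
      rw [ZMod.val_zero, hval] at this
      omega

lemma smul_eq_self_iff_mem_twistedFixedPoints {n m : ℕ} (g : B n) (x : Fin n → ZMod m) :
    g • x = x ↔
      x ∈ g.right.twistedFixedPoints fun j => (-1) ^ (Multiplicative.toAdd g.left j).val := by
  refine ⟨fun h j => ?_, fun h => funext fun i => ?_⟩
  · rw [← congrFun h (g.right j), bact_smul_def, Equiv.Perm.coe_inv, Equiv.symm_apply_apply]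
  · have := h (g.right⁻¹ i)
    rw [Equiv.Perm.coe_inv, Equiv.apply_symm_apply] at this
    rw [bact_smul_def, this]
    rfl

theorem card_fixedPoints_even_general (n l : ℕ) (hl : 1 ≤ l) (g : B n) :
    Nat.card {x : Fin n → ZMod (2 * l) // g • x = x}
      = 2 ^ oddOrbitCount (Multiplicative.toAdd g.left) g.right
        * (2 * l) ^ evenOrbitCount (Multiplicative.toAdd g.left) g.right := by
  rw [Nat.card_congr (Equiv.subtypeEquivRight (smul_eq_self_iff_mem_twistedFixedPoints g)),
    Equiv.Perm.card_twistedFixedPoints]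
  simp only [prod_neg_one_pow_val, card_neg_one_pow_val_mul_eq_self hl]
  rw [prod_ite, prod_const, prod_const, mul_comm]
  rfl

set_option synthInstance.maxHeartbeats 1000000 in
/-- **Lemma (character of the even generalized parking space).**  For
`g = (ε, σ) ∈ B n`, the number of points of `Fin n → ZMod (2ℓ)` fixed by `g`
is `2 ^ o(ε,σ) * (2ℓ) ^ e(ε,σ)`, where `e(ε,σ)` and `o(ε,σ)` are the numbers
of even and odd orbits of `σ` on `Fin n`. -/
theorem card_fixedPoints_even (n l : ℕ) (hn : 1 ≤ n) (hl : 1 ≤ l) (g : B n) :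
    Nat.card {x : Fin n → ZMod (2 * l) // g • x = x}
      = 2 ^ oddOrbitCount (Multiplicative.toAdd g.left) g.right
        * (2 * l) ^ evenOrbitCount (Multiplicative.toAdd g.left) g.right :=
  card_fixedPoints_even_general n l hl g
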